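/- Let I = I_Δ + I_s ⊂ S = k[x_0,…,x_r] be generated by quadratic monomials, where I_Δ is the squarefree part (the Stanley–Reisner ideal of a simplicial complex Δ) and I_s is generated by the squares x^2 of the 'square vertices'. Then I is saturated if and only if every maximal face (facet) of Δ contains at least one non-square vertex. -/

import Mathlib

attribute [local instance] Classical.propDecidable

/-- An abstract simplicial complex on vertex type `V`. -/
structure SComplex (V : Type) [DecidableEq V] where
  faces : Set (Finset V)
  empty_mem : ∅ ∈ faces
  down_closed : ∀ {s t : Finset V}, s ∈ faces → t ⊆ s → t ∈ faces

variable {V : Type} [DecidableEq V]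

/-- The full subcomplex of `Δ` on a vertex set `W`: all faces contained in `W`. -/
def SComplex.fullSub (Δ : SComplex V) (W : Set V) : SComplex V where
  faces := {s | s ∈ Δ.faces ∧ ↑s ⊆ W}
  empty_mem := ⟨Δ.empty_mem, by simp⟩
  down_closed := fun hs hts =>
    ⟨Δ.down_closed hs.1 hts, Set.Subset.trans (Finset.coe_subset.mpr hts) hs.2⟩

variable [Fintype V] [LinearOrder V]

/-- The space of simplicial `k`-chains of `Δ` supported on faces with `n` vertices
(i.e. of dimension `n-1`); for `n = 0` this is the span of the empty face, so the
resulting chain complex is the augmented (reduced) one. -/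
abbrev SComplex.chain (k : Type) [Field k] (Δ : SComplex V) (n : ℕ) : Type :=
  {F : Finset V // F ∈ Δ.faces ∧ F.card = n} → k

/-- The simplicial boundary operator from chains on faces with `n+1` vertices to
chains on faces with `n` vertices, with the usual alternating signs determined by
the linear order on the vertices. -/
noncomputable def SComplex.bdry (k : Type) [Field k] (Δ : SComplex V) (n : ℕ) :
    Δ.chain k (n+1) →ₗ[k] Δ.chain k n where
  toFun f G := ∑ v : V,
    if h : v ∉ G.1 ∧ insert v G.1 ∈ Δ.faces then
      (-1 : k) ^ (G.1.filter (fun u => u < v)).card *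
        f ⟨insert v G.1, h.2, by rw [Finset.card_insert_of_notMem h.1, G.2.2]⟩
    else 0
  map_add' f g := by
    funext G
    show (_ : k) = (_ : k) + (_ : k)
    rw [← Finset.sum_add_distrib]
    refine Finset.sum_congr rfl fun v _ => ?_
    by_cases h : v ∉ G.1 ∧ insert v G.1 ∈ Δ.faces
    · simp only [dif_pos h, Pi.add_apply]; ring
    · simp [dif_neg h]
  map_smul' c f := by
    funext G
    show _ = c * _
    rw [Finset.mul_sum]
    refine Finset.sum_congr rfl fun v _ => ?_
    by_cases h : v ∉ G.1 ∧ insert v G.1 ∈ Δ.faces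
    · simp only [dif_pos h, Pi.smul_apply, smul_eq_mul]; ring
    · simp [dif_neg h]

/-- The `i`-th reduced simplicial homology of `Δ` with coefficients in `k`:
cycles supported on faces with `i+1` vertices (dimension `i`) modulo boundaries.
(Since chains in degree 0 are spanned by the empty face, this is reduced homology.) -/
abbrev SComplex.redHomology (k : Type) [Field k] (Δ : SComplex V) (i : ℕ) :=
  LinearMap.ker (Δ.bdry k i) ⧸
    Submodule.comap (LinearMap.ker (Δ.bdry k i)).subtype
      (LinearMap.range (Δ.bdry k (i+1)))

/-!
`I` is a monomial ideal, so `(I : (x_0, …, x_r)) = I` says exactly that a monomial `x^b` lies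
in `I` as soon as every `x^b x_v` does. The monomials outside `I` are the `x^b` whose support is a face of `Δ`
and in which square vertices occur with exponent at most one. If such a support lies in a facet
with a non-square vertex `w`, then `x^b x_w ∉ I` as well. Conversely, if a facet `F` consists of
square vertices only, then `x_F ∉ I` while `x_F x_v ∈ I` for every `v`: for `v ∈ F` it is divisible
by `x_v²`, and for `v ∉ F` by the non-face monomial `x_{F ∪ {v}}`.
-/

open MvPolynomial

namespace MvPolynomial

variable {σ R : Type*} [CommSemiring R]

theorem mem_span_monomial_colon_range_X_iff {E : Set (σ →₀ ℕ)} {f : MvPolynomial σ R} :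
    f ∈ (Ideal.span ((fun a => monomial a (1 : R)) '' E)).colon (Set.range X) ↔
      ∀ b ∈ f.support, ∀ i, ∃ a ∈ E, a ≤ b + Finsupp.single i 1 := by
  simp only [Submodule.mem_colon, Set.forall_mem_range, smul_eq_mul,
    mem_ideal_span_monomial_image, support_mul_X, Finset.mem_map, addRightEmbedding_apply,
    forall_exists_index, and_imp, forall_apply_eq_imp_iff₂]
  exact ⟨fun h b hb i => h i b hb, fun h i b hb => h b hb i⟩

theorem span_monomial_colon_span_X_eq_self_iff [Nontrivial R] {E : Set (σ →₀ ℕ)} :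
    letI I := Ideal.span ((fun a => monomial a (1 : R)) '' E)
    I.colon (Ideal.span (Set.range (X : σ → MvPolynomial σ R)) : Set (MvPolynomial σ R)) = I ↔
      ∀ b, (∀ i, ∃ a ∈ E, a ≤ b + Finsupp.single i 1) → ∃ a ∈ E, a ≤ b := by
  rw [Ideal.colon_span]
  constructor
  · intro h b hb
    have hmem : monomial b (1 : R) ∈ Ideal.span ((fun a => monomial a (1 : R)) '' E) :=
      h ▸ mem_span_monomial_colon_range_X_iff.mpr (by simpa [support_monomial] using hb)
    exact mem_ideal_span_monomial_image.mp hmem b (by simp [support_monomial])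
  · intro h
    refine le_antisymm (fun f hf => mem_ideal_span_monomial_image.mpr fun b hb =>
      h b (mem_span_monomial_colon_range_X_iff.mp hf b hb)) Ideal.le_colon

end MvPolynomial

namespace Finsupp

variable {σ : Type*} [DecidableEq σ]

lemma sum_single_one_apply (s : Finset σ) (u : σ) :
    (∑ v ∈ s, single v 1 : σ →₀ ℕ) u = if u ∈ s then 1 else 0 := by
  simp [finsetSum_apply, single_apply]

@[simp]
lemma support_sum_single_one (s : Finset σ) : (∑ v ∈ s, single v 1 : σ →₀ ℕ).support = s := by
  ext u
  simp [sum_single_one_apply]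

lemma sum_single_one_le_iff {s : Finset σ} {b : σ →₀ ℕ} :
    ∑ v ∈ s, single v 1 ≤ b ↔ s ⊆ b.support := by
  simp only [le_def, sum_single_one_apply, Finset.subset_iff, mem_support_iff]
  refine forall_congr' fun u => ?_
  split_ifs <;> simp [*, Nat.one_le_iff_ne_zero]

lemma support_add_single_one (b : σ →₀ ℕ) (v : σ) :
    (b + single v 1).support = insert v b.support := by
  rw [support_add_eq_union, support_single _ one_ne_zero, Finset.union_comm,
    Finset.singleton_union]

end Finsupp

namespace SComplex

variable {σ : Type} [DecidableEq σ] (Δ : SComplex σ) (sq : Set σ)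

lemma exists_facet_superset [Finite σ] {F : Finset σ} (hF : F ∈ Δ.faces) :
    ∃ G ∈ Δ.faces, F ⊆ G ∧ ∀ G' ∈ Δ.faces, G ⊆ G' → G' = G := by
  obtain ⟨G, hFG, hG⟩ := Finite.exists_le_maximal (p := (· ∈ Δ.faces)) hF
  exact ⟨G, hG.prop, hFG, fun G' hG' hGG' => le_antisymm (hG.2 hG' hGG') hGG'⟩

def generatorExponents : Set (σ →₀ ℕ) :=
  (fun s => ∑ v ∈ s, Finsupp.single v 1) '' {s | s ∉ Δ.faces} ∪
    (fun v => Finsupp.single v 2) '' sq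

/-- `x^b` is a standard monomial, i.e. lies outside the ideal generated by `generatorExponents`. -/
def IsStandardExponent (b : σ →₀ ℕ) : Prop :=
  b.support ∈ Δ.faces ∧ ∀ v ∈ sq, b v < 2

lemma span_monomial_generatorExponents (R : Type*) [CommSemiring R] :
    Ideal.span ((fun a => monomial a (1 : R)) '' Δ.generatorExponents sq) =
      Ideal.span {m | ∃ s : Finset σ, s ∉ Δ.faces ∧ m = s.prod (fun v => X v)} ⊔
        Ideal.span ((fun v => X v ^ 2) '' sq) := by
  rw [generatorExponents, Set.image_union, Ideal.span_union, Set.image_image, Set.image_image]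
  congr 2
  · ext m
    simp only [Set.mem_image, Set.mem_ofPred_eq, monomial_sum_one]
    exact exists_congr fun s => and_congr_right fun _ => eq_comm
  · ext m
    simp [X_pow_eq_monomial]

lemma exists_generatorExponents_le_iff {b : σ →₀ ℕ} :
    (∃ a ∈ Δ.generatorExponents sq, a ≤ b) ↔ ¬ Δ.IsStandardExponent sq b := by
  have hnonface : (∃ s ∉ Δ.faces, s ⊆ b.support) ↔ b.support ∉ Δ.faces :=
    ⟨fun ⟨_, hs, hsb⟩ hb => hs (Δ.down_closed hb hsb), fun hb => ⟨_, hb, subset_rfl⟩⟩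
  simp only [generatorExponents, Set.mem_union, or_and_right, exists_or, Set.exists_mem_image,
    Set.mem_ofPred_eq, Finsupp.sum_single_one_le_iff, Finsupp.single_le_iff, hnonface,
    IsStandardExponent, not_and, not_forall, not_lt, exists_prop]
  exact or_iff_not_imp_left.trans (imp_congr_left not_not)

theorem forall_isStandardExponent_exists_add_single_iff [Finite σ] :
    (∀ b, Δ.IsStandardExponent sq b → ∃ v, Δ.IsStandardExponent sq (b + Finsupp.single v 1)) ↔
      ∀ F ∈ Δ.faces, (∀ G ∈ Δ.faces, F ⊆ G → G = F) → ∃ v ∈ F, v ∉ sq := by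
  constructor
  · intro h F hF hFmax
    by_contra! hFsq
    obtain ⟨v, hsupp, hle⟩ := h (∑ u ∈ F, Finsupp.single u 1)
      ⟨by simpa using hF, fun u _ => by rw [Finsupp.sum_single_one_apply]; split_ifs <;> simp⟩
    rw [Finsupp.support_add_single_one, Finsupp.support_sum_single_one] at hsupp
    by_cases hv : v ∈ F
    · have hv2 := hle v (hFsq v hv)
      rw [Finsupp.add_apply, Finsupp.sum_single_one_apply, if_pos hv, Finsupp.single_eq_same] at hv2
      omega
    · exact hv (hFmax _ hsupp (Finset.subset_insert v F) ▸ Finset.mem_insert_self v F)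
  · rintro h b ⟨hb, hbsq⟩
    obtain ⟨G, hG, hbG, hGmax⟩ := Δ.exists_facet_superset hb
    obtain ⟨w, hwG, hwsq⟩ := h G hG hGmax
    refine ⟨w, ?_, fun u hu => ?_⟩
    · rw [Finsupp.support_add_single_one]
      exact Δ.down_closed hG (Finset.insert_subset hwG hbG)
    · have huw : w ≠ u := fun h => hwsq (h ▸ hu)
      simpa [Finsupp.single_apply, huw] using hbsq u hu

end SComplex

open MvPolynomial in
theorem statement_18_general (k : Type) [Field k] {r : ℕ} (Δ : SComplex (Fin (r + 1)))
    (sq : Set (Fin (r + 1))) :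
    letI S := MvPolynomial (Fin (r + 1)) k
    letI IΔ : Ideal S := Ideal.span {m | ∃ s : Finset (Fin (r + 1)),
        s ∉ Δ.faces ∧ m = s.prod (fun v => X v)}
    letI I : Ideal S := IΔ ⊔ Ideal.span ((fun v => X v ^ 2) '' sq)
    (I.colon (Ideal.span (Set.range (X : Fin (r + 1) → S))) = I ↔
      ∀ F ∈ Δ.faces, (∀ G ∈ Δ.faces, F ⊆ G → G = F) → ∃ v ∈ F, v ∉ sq) := by
  rw [← Δ.span_monomial_generatorExponents, span_monomial_colon_span_X_eq_self_iff,
    ← Δ.forall_isStandardExponent_exists_add_single_iff]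
  simp only [SComplex.exists_generatorExponents_le_iff, imp_not_comm, not_forall_not]

open MvPolynomial in
/-- let `I = I_Δ + I_s ⊆ S = k[x_0, …, x_r]` be an ideal generated
by quadratic monomials, where `I_Δ` is the Stanley–Reisner ideal of the
simplicial complex `Δ` (every vertex a face, and `Δ` a clique complex so that
`I_Δ` is quadratic) and `I_s` is generated by the squares `x_v²` of the square
vertices `v ∈ sq`. Then `I` is saturated — `(I : (x_0, …, x_r)) = I` — if and
only if every maximal face (facet) of `Δ` contains at least one non-square
vertex. -/
theorem statement_18 (k : Type) [Field k] {r : ℕ} (Δ : SComplex (Fin (r + 1)))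
    (sq : Set (Fin (r + 1)))
    (hvert : ∀ v : Fin (r + 1), ({v} : Finset (Fin (r + 1))) ∈ Δ.faces)
    (hclique : ∀ s : Finset (Fin (r + 1)),
      (∀ v ∈ s, ∀ w ∈ s, v ≠ w → ({v, w} : Finset (Fin (r + 1))) ∈ Δ.faces) →
      s ∈ Δ.faces) :
    letI S := MvPolynomial (Fin (r + 1)) k
    letI IΔ : Ideal S := Ideal.span {m | ∃ s : Finset (Fin (r + 1)),
        s ∉ Δ.faces ∧ m = s.prod (fun v => X v)}
    letI I : Ideal S := IΔ ⊔ Ideal.span ((fun v => X v ^ 2) '' sq)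
    (I.colon (Ideal.span (Set.range (X : Fin (r + 1) → S))) = I ↔
      ∀ F ∈ Δ.faces, (∀ G ∈ Δ.faces, F ⊆ G → G = F) → ∃ v ∈ F, v ∉ sq) :=
  statement_18_general k Δ sq
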